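/- Let L be positive definite self-adjoint on a finite-dimensional real inner product space H and τ > 0. With R₋ = [[I, -(τ/2)I], [(τ/2)L, I]] on H × H, the operator norm of R₋⁻¹ with respect to the energy norm ‖(u,v)‖_E² = ⟨Lu,u⟩ + ‖v‖² is at most 1. -/

import Mathlib

/-! `R₋ = I - (τ/2) A` for the wave generator `A (u, v) = (v, -L u)`. With `t = τ/2`,
`‖R₋ (a, b)‖_E² = ‖(a, b)‖_E² + t² (⟪L b, b⟫ + ‖L a‖²)`, so `R₋` never decreases the energy,
and applying this to `R₋⁻¹ w` gives the bound. -/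

open RealInnerProductSpace ContinuousLinearMap

section EnergyIdentity

variable {H : Type*} [NormedAddCommGroup H] [InnerProductSpace ℝ H]

/-- The cross terms `∓ 2t⟪L a, b⟫` cancel by symmetry of `L`. -/
theorem LinearMap.IsSymmetric.energy_implicitHalfStep_eq {L : H →ₗ[ℝ] H} (hL : L.IsSymmetric)
    (t : ℝ) (a b : H) :
    ⟪L (a - t • b), a - t • b⟫ + ‖t • L a + b‖ ^ 2
      = ⟪L a, a⟫ + ‖b‖ ^ 2 + t ^ 2 * (⟪L b, b⟫ + ‖L a‖ ^ 2) := by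
  have hba : ⟪L b, a⟫ = ⟪L a, b⟫ := (hL b a).trans (real_inner_comm _ _)
  rw [norm_add_sq_real, norm_smul, mul_pow, Real.norm_eq_abs, sq_abs, map_sub, map_smul,
    inner_sub_left, inner_sub_right, inner_sub_right, real_inner_smul_left, real_inner_smul_left,
    real_inner_smul_right, real_inner_smul_right, real_inner_smul_left, hba]
  ring

theorem LinearMap.IsSymmetric.energy_le_energy_implicitHalfStep {L : H →ₗ[ℝ] H}
    (hL : L.IsSymmetric) (t : ℝ) (a b : H) (hb : 0 ≤ ⟪L b, b⟫) :
    ⟪L a, a⟫ + ‖b‖ ^ 2 ≤ ⟪L (a - t • b), a - t • b⟫ + ‖t • L a + b‖ ^ 2 := by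
  rw [hL.energy_implicitHalfStep_eq]
  have : 0 ≤ t ^ 2 * (⟪L b, b⟫ + ‖L a‖ ^ 2) := by positivity
  linarith

end EnergyIdentity

theorem stmt_4_general {H : Type*} [NormedAddCommGroup H] [InnerProductSpace ℝ H]
    [FiniteDimensional ℝ H]
    (L : H →L[ℝ] H) (hsa : IsSelfAdjoint L)
    (hposdef : ∀ x : H, x ≠ 0 → 0 < ⟪L x, x⟫)
    (τ : ℝ)
    (Rm : (H × H) →L[ℝ] (H × H))
    (hRm : Rm = (ContinuousLinearMap.fst ℝ H H - (τ / 2) • ContinuousLinearMap.snd ℝ H H).prod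
        ((τ / 2) • (L.comp (ContinuousLinearMap.fst ℝ H H)) + ContinuousLinearMap.snd ℝ H H))
    (S : (H × H) →L[ℝ] (H × H)) (hS : Rm * S = 1)
    (En : H × H → ℝ) (hEn : ∀ w : H × H, En w = ⟪L w.1, w.1⟫ + ‖w.2‖ ^ 2) :
    ∀ w : H × H, En (S w) ≤ En w := by
  have hnonneg (x : H) : 0 ≤ ⟪L x, x⟫ := by
    rcases eq_or_ne x 0 with rfl | hx
    · simp
    · exact (hposdef x hx).le
  have hRm_apply (a b : H) : Rm (a, b) = (a - (τ / 2) • b, (τ / 2) • L a + b) := by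
    simp [hRm]
  intro w
  have hRmS : Rm (S w) = w := DFunLike.congr_fun hS w
  calc En (S w) ≤ En (Rm (S w)) := by
        obtain ⟨a, b⟩ := S w
        rw [hRm_apply, hEn, hEn]
        exact (isSelfAdjoint_iff_isSymmetric.mp hsa).energy_le_energy_implicitHalfStep _ a b
          (hnonneg b)
    _ = En w := by rw [hRmS]

theorem stmt_4 {H : Type*} [NormedAddCommGroup H] [InnerProductSpace ℝ H]
    [FiniteDimensional ℝ H]
    (L : H →L[ℝ] H) (hsa : IsSelfAdjoint L)
    (hposdef : ∀ x : H, x ≠ 0 → 0 < ⟪L x, x⟫)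
    (τ : ℝ) (hτ : 0 < τ)
    (Rm : (H × H) →L[ℝ] (H × H))
    (hRm : Rm = (ContinuousLinearMap.fst ℝ H H - (τ / 2) • ContinuousLinearMap.snd ℝ H H).prod
        ((τ / 2) • (L.comp (ContinuousLinearMap.fst ℝ H H)) + ContinuousLinearMap.snd ℝ H H))
    (S : (H × H) →L[ℝ] (H × H)) (hS : Rm * S = 1) (hS' : S * Rm = 1)
    (En : H × H → ℝ) (hEn : ∀ w : H × H, En w = ⟪L w.1, w.1⟫ + ‖w.2‖ ^ 2) :
    ∀ w : H × H, En (S w) ≤ En w :=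
  stmt_4_general L hsa hposdef τ Rm hRm S hS En hEn
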